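/- For the edgeless cube Q_L, the basic sequences convergent over the solved configuration f_solved are not closed under concatenation: there exists a basic sequence s that is convergent over f_solved but whose self-concatenation s⌢s is divergent over f_solved. -/

import Mathlib

universe u v

namespace InfRubik

/-- The three axes of the cube. -/
inductive Axis : Type
  | x | y | z
  deriving DecidableEq

/-- The six colors of the Rubik's cube.  A *configuration* is a map from cells to
`Option Color`, where `none` plays the role of the non-color `NaC`. -/
inductive Color : Type
  | red | white | green | orange | yellow | blue
  deriving DecidableEq

/-- The set `L̄† = -L ∪ {0} ∪ L ∪ {±∞}` of extended coordinates. -/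
inductive ExtCoord (L : Type u) : Type u
  | neg : L → ExtCoord L
  | zero : ExtCoord L
  | pos : L → ExtCoord L
  | negInf : ExtCoord L
  | posInf : ExtCoord L

namespace ExtCoord

variable {L : Type u}

/-- The reflection `r ↦ -r`. -/
def reflect : ExtCoord L → ExtCoord L
  | .neg r => .pos r
  | .zero => .zero
  | .pos r => .neg r
  | .negInf => .posInf
  | .posInf => .negInf

@[simp] theorem reflect_reflect (a : ExtCoord L) : a.reflect.reflect = a := by
  cases a <;> rfl

/-- Whether a coordinate is `±∞`. -/
def isInfB : ExtCoord L → Bool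
  | .negInf => true
  | .posInf => true
  | _ => false

@[simp] theorem isInfB_reflect (a : ExtCoord L) : a.reflect.isInfB = a.isInfB := by
  cases a <;> rfl

/-- Whether a coordinate is `0`. -/
def isZeroB : ExtCoord L → Bool
  | .zero => true
  | _ => false

@[simp] theorem isZeroB_reflect (a : ExtCoord L) : a.reflect.isZeroB = a.isZeroB := by
  cases a <;> rfl

end ExtCoord

/-- A point of the ambient space `L̄† × L̄† × L̄†`. -/
abbrev Triple (L : Type u) := ExtCoord L × ExtCoord L × ExtCoord L

/-- The coordinate of a point along an axis. -/
def Triple.coord {L : Type u} : Axis → Triple L → ExtCoord L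
  | .x, p => p.1
  | .y, p => p.2.1
  | .z, p => p.2.2

/-- Quarter-turn rotation of the ambient space about an axis (right-hand rule). -/
def rot {L : Type u} : Axis → Triple L → Triple L
  | .x, p => (p.1, p.2.2.reflect, p.2.1)
  | .y, p => (p.2.2, p.2.1, p.1.reflect)
  | .z, p => (p.2.1.reflect, p.1, p.2.2)

/-- Inverse quarter-turn rotation of the ambient space about an axis. -/
def rotInv {L : Type u} : Axis → Triple L → Triple L
  | .x, p => (p.1, p.2.2, p.2.1.reflect)
  | .y, p => (p.2.2.reflect, p.2.1, p.1)
  | .z, p => (p.2.1, p.1.reflect, p.2.2)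

@[simp] theorem rotInv_rot {L : Type u} (i : Axis) (p : Triple L) : rotInv i (rot i p) = p := by
  cases i <;> simp [rot, rotInv]

@[simp] theorem rot_rotInv {L : Type u} (i : Axis) (p : Triple L) : rot i (rotInv i p) = p := by
  cases i <;> simp [rot, rotInv]

/-- The number of infinite coordinates of a point. -/
def infCount {L : Type u} (p : Triple L) : ℕ :=
  (if p.1.isInfB then 1 else 0) + (if p.2.1.isInfB then 1 else 0) +
    (if p.2.2.isInfB then 1 else 0)

/-- The number of zero coordinates of a point. -/
def zeroCount {L : Type u} (p : Triple L) : ℕ :=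
  (if p.1.isZeroB then 1 else 0) + (if p.2.1.isZeroB then 1 else 0) +
    (if p.2.2.isZeroB then 1 else 0)

theorem infCount_rot {L : Type u} (i : Axis) (p : Triple L) : infCount (rot i p) = infCount p := by
  obtain ⟨a, b, c⟩ := p
  cases i <;> cases a <;> cases b <;> cases c <;> rfl

theorem infCount_rotInv {L : Type u} (i : Axis) (p : Triple L) :
    infCount (rotInv i p) = infCount p := by
  obtain ⟨a, b, c⟩ := p
  cases i <;> cases a <;> cases b <;> cases c <;> rfl

@[simp] theorem coord_rot_self {L : Type u} (i : Axis) (p : Triple L) :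
    (rot i p).coord i = p.coord i := by
  cases i <;> rfl

@[simp] theorem coord_rotInv_self {L : Type u} (i : Axis) (p : Triple L) :
    (rotInv i p).coord i = p.coord i := by
  cases i <;> rfl

/-- A cell of the *edgeless* cube `Q_L`: a point of the ambient space with exactly one
infinite coordinate. -/
def Cell (L : Type u) : Type u := {p : Triple L // infCount p = 1}

open Classical in
/-- The underlying map on points of the quarter-turn twist `T_{i,α}`. -/
noncomputable def qtTriple {L : Type u} (i : Axis) (α : ExtCoord L) (p : Triple L) : Triple L :=
  if p.coord i = α then rot i p else p

open Classical in
/-- The underlying map on points of the inverse quarter-turn twist `T_{i,α}⁻¹`. -/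
noncomputable def qtTripleInv {L : Type u} (i : Axis) (α : ExtCoord L) (p : Triple L) : Triple L :=
  if p.coord i = α then rotInv i p else p

theorem qtTripleInv_qtTriple {L : Type u} (i : Axis) (α : ExtCoord L) (p : Triple L) :
    qtTripleInv i α (qtTriple i α p) = p := by
  classical
  by_cases h : p.coord i = α <;> simp [qtTriple, qtTripleInv, h]

theorem qtTriple_qtTripleInv {L : Type u} (i : Axis) (α : ExtCoord L) (p : Triple L) :
    qtTriple i α (qtTripleInv i α p) = p := by
  classical
  by_cases h : p.coord i = α <;> simp [qtTriple, qtTripleInv, h]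

theorem infCount_qtTriple {L : Type u} (i : Axis) (α : ExtCoord L) (p : Triple L) :
    infCount (qtTriple i α p) = infCount p := by
  classical
  by_cases h : p.coord i = α <;> simp [qtTriple, h, infCount_rot]

theorem infCount_qtTripleInv {L : Type u} (i : Axis) (α : ExtCoord L) (p : Triple L) :
    infCount (qtTripleInv i α p) = infCount p := by
  classical
  by_cases h : p.coord i = α <;> simp [qtTripleInv, h, infCount_rotInv]

/-- The quarter-turn twist `T_{i,α}` of the edgeless cube, as a permutation of cells. -/
noncomputable def quarterTurn {L : Type u} (i : Axis) (α : ExtCoord L) : Equiv.Perm (Cell L) where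
  toFun c := ⟨qtTriple i α c.1, by rw [infCount_qtTriple]; exact c.2⟩
  invFun c := ⟨qtTripleInv i α c.1, by rw [infCount_qtTripleInv]; exact c.2⟩
  left_inv c := Subtype.ext (qtTripleInv_qtTriple i α c.1)
  right_inv c := Subtype.ext (qtTriple_qtTripleInv i α c.1)

/-- The basic twists of the edgeless cube: quarter turns, half turns and reverse
quarter turns of a single layer. -/
def IsBasic (L : Type u) (π : Equiv.Perm (Cell L)) : Prop :=
  ∃ (i : Axis) (α : ExtCoord L),
    π = quarterTurn i α ∨ π = quarterTurn i α ^ 2 ∨ π = (quarterTurn i α)⁻¹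

/-! ### The edged cube -/

/-- How a quarter-turn about axis `i` transports the face tag of a cell. -/
def tagMap : Axis → Axis → Axis
  | .x, .x => .x
  | .x, .y => .z
  | .x, .z => .y
  | .y, .x => .z
  | .y, .y => .y
  | .y, .z => .x
  | .z, .x => .y
  | .z, .y => .x
  | .z, .z => .z

@[simp] theorem tagMap_tagMap (i j : Axis) : tagMap i (tagMap i j) = j := by
  cases i <;> cases j <;> rfl

theorem isInfB_coord_tagMap_rot {L : Type u} (i j : Axis) (p : Triple L) :
    ((rot i p).coord (tagMap i j)).isInfB = (p.coord j).isInfB := by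
  cases i <;> cases j <;> simp [rot, Triple.coord, tagMap]

theorem isInfB_coord_tagMap_rotInv {L : Type u} (i j : Axis) (p : Triple L) :
    ((rotInv i p).coord (tagMap i j)).isInfB = (p.coord j).isInfB := by
  cases i <;> cases j <;> simp [rotInv, Triple.coord, tagMap]

/-- A cell of the *edged* cube `Q̄_L`: a point of the ambient space together with a tag
naming an axis, such that the coordinate along the tagged axis is infinite (the tag
indicates the face to which the cell belongs). -/
def ECell (L : Type u) : Type u := {q : Triple L × Axis // (q.1.coord q.2).isInfB = true}

open Classical in
/-- The underlying map of the quarter-turn twist `T_{i,α}` of the edged cube. -/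
noncomputable def eqtFun {L : Type u} (i : Axis) (α : ExtCoord L) (q : Triple L × Axis) :
    Triple L × Axis :=
  if q.1.coord i = α then (rot i q.1, tagMap i q.2) else q

open Classical in
/-- The underlying map of the reverse quarter-turn twist of the edged cube. -/
noncomputable def eqtFunInv {L : Type u} (i : Axis) (α : ExtCoord L) (q : Triple L × Axis) :
    Triple L × Axis :=
  if q.1.coord i = α then (rotInv i q.1, tagMap i q.2) else q

theorem eqtFunInv_eqtFun {L : Type u} (i : Axis) (α : ExtCoord L) (q : Triple L × Axis) :
    eqtFunInv i α (eqtFun i α q) = q := by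
  classical
  by_cases h : q.1.coord i = α <;> simp [eqtFun, eqtFunInv, h]

theorem eqtFun_eqtFunInv {L : Type u} (i : Axis) (α : ExtCoord L) (q : Triple L × Axis) :
    eqtFun i α (eqtFunInv i α q) = q := by
  classical
  by_cases h : q.1.coord i = α <;> simp [eqtFun, eqtFunInv, h]

theorem isInfB_eqtFun {L : Type u} (i : Axis) (α : ExtCoord L) (q : Triple L × Axis) :
    (((eqtFun i α q).1.coord (eqtFun i α q).2)).isInfB = ((q.1.coord q.2)).isInfB := by
  classical
  by_cases h : q.1.coord i = α <;> simp [eqtFun, h, isInfB_coord_tagMap_rot]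

theorem isInfB_eqtFunInv {L : Type u} (i : Axis) (α : ExtCoord L) (q : Triple L × Axis) :
    (((eqtFunInv i α q).1.coord (eqtFunInv i α q).2)).isInfB = ((q.1.coord q.2)).isInfB := by
  classical
  by_cases h : q.1.coord i = α <;> simp [eqtFunInv, h, isInfB_coord_tagMap_rotInv]

/-- The quarter-turn twist `T_{i,α}` of the edged cube, as a permutation of cells.  A face
twist moves, besides the cells of its face, also the coupled edge and corner cells of the
adjacent faces lying in the twisted layer. -/
noncomputable def equarterTurn {L : Type u} (i : Axis) (α : ExtCoord L) :
    Equiv.Perm (ECell L) where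
  toFun c := ⟨eqtFun i α c.1, by rw [isInfB_eqtFun]; exact c.2⟩
  invFun c := ⟨eqtFunInv i α c.1, by rw [isInfB_eqtFunInv]; exact c.2⟩
  left_inv c := Subtype.ext (eqtFunInv_eqtFun i α c.1)
  right_inv c := Subtype.ext (eqtFun_eqtFunInv i α c.1)

/-- The basic twists of the edged cube. -/
def IsEBasic (L : Type u) (π : Equiv.Perm (ECell L)) : Prop :=
  ∃ (i : Axis) (α : ExtCoord L),
    π = equarterTurn i α ∨ π = equarterTurn i α ^ 2 ∨ π = (equarterTurn i α)⁻¹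

/-! ### Transfinite sequences of twists and their action on labellings -/

open Classical in
/-- The eventual value of an ordinal-indexed family of `Option`-values: `some v` if the family
stabilizes on `some v` before `lam`, and `none` otherwise. -/
noncomputable def eventualVal {X : Type u} (lam : Ordinal.{v})
    (g : ∀ η, η < lam → Option X) : Option X :=
  if h : ∃ v : X, ∃ γ, γ < lam ∧ ∀ η (hη : η < lam), γ ≤ η → g η hη = some v
  then some h.choose else none

/-- Applying an ordinal-indexed sequence of permutations to an initial labelling:
`run σ f0 θ` is the labelling obtained after the first `θ` moves, with
`f_{η+1}(c) = f_η(σ_η⁻¹ c)` at successors and the eventual value (or `NaC = none`)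
at limits. -/
noncomputable def run {Cl : Type v} {X : Type u} (σ : Ordinal.{v} → Equiv.Perm Cl)
    (f0 : Cl → Option X) (θ : Ordinal.{v}) : Cl → Option X :=
  Ordinal.limitRecOn (motive := fun _ => Cl → Option X) θ f0
    (fun η fη c => fη ((σ η)⁻¹ c))
    (fun lam _ prev c => eventualVal lam (fun η h => prev η h c))

/-- A (transfinite) sequence of twists of length `len`, each of which satisfies the
predicate `B` (being a basic twist). -/
structure TwistSeq (Cl : Type v) (B : Equiv.Perm Cl → Prop) : Type (v + 1) where
  len : Ordinal.{v}
  seq : Ordinal.{v} → Equiv.Perm Cl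
  basic : ∀ η, η < len → B (seq η)

namespace TwistSeq

variable {Cl : Type v} {B : Equiv.Perm Cl → Prop}

/-- The terminal labelling obtained by applying a sequence of twists to `f0`. -/
noncomputable def terminal (s : TwistSeq Cl B) {X : Type u} (f0 : Cl → Option X) :
    Cl → Option X :=
  run s.seq f0 s.len

/-- A sequence of twists is convergent over `f0` if the terminal labelling is legal,
i.e. never takes the value `NaC = none`. -/
def ConvOver (s : TwistSeq Cl B) {X : Type u} (f0 : Cl → Option X) : Prop :=
  ∀ c, s.terminal f0 c ≠ none

/-- A sequence of twists is universally convergent if it is convergent over the identity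
labelling. -/
def UnivConv (s : TwistSeq Cl B) : Prop := s.ConvOver (fun c => some c)

/-- A sequence is twist-finite if each twist occurs in it only finitely many times. -/
def TwistFinite (s : TwistSeq Cl B) : Prop :=
  ∀ π : Equiv.Perm Cl, {η : Ordinal | η < s.len ∧ s.seq η = π}.Finite

/-- Two sequences are equivalent, `σ⃗ ∼ τ⃗`, when they produce the same terminal
configuration over every initial configuration. -/
def Sim (s t : TwistSeq Cl B) : Prop :=
  ∀ f : Cl → Option Color, s.terminal f = t.terminal f

/-- Concatenation of twist sequences: `s.concat t` performs `s` and then `t`. -/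
noncomputable def concat (s t : TwistSeq Cl B) : TwistSeq Cl B where
  len := s.len + t.len
  seq := fun η => if η < s.len then s.seq η else t.seq (η - s.len)
  basic := by
    intro η hη
    by_cases h : η < s.len
    · simpa [h] using s.basic η h
    · have hc : 0 < t.len := by
        rcases eq_zero_or_pos t.len with h0 | h0
        · rw [h0, add_zero] at hη; exact absurd hη h
        · exact h0
      have h2 : η - s.len < t.len := Ordinal.sub_lt_of_lt_add hη hc
      simpa [h] using t.basic _ h2

/-- The empty sequence of twists. -/
def empty (Cl : Type v) (B : Equiv.Perm Cl → Prop) : TwistSeq Cl B where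
  len := 0
  seq := fun _ => 1
  basic := fun η hη => absurd hη (by simp)

/-- `n`-fold self-concatenation of a sequence of twists. -/
noncomputable def npow (s : TwistSeq Cl B) : ℕ → TwistSeq Cl B
  | 0 => empty Cl B
  | n + 1 => (npow s n).concat s

end TwistSeq

/-- Basic sequences of twists of the edgeless cube `Q_L`. -/
abbrev BasicSeq (L : Type u) := TwistSeq (Cell L) (IsBasic L)

/-- Basic sequences of twists of the edged cube `Q̄_L`. -/
abbrev EBasicSeq (L : Type u) := TwistSeq (ECell L) (IsEBasic L)

/-- `f` is accessible from `f0` when some basic sequence applied to `f0` is convergent with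
terminal configuration `f`. -/
def Accessible {Cl : Type v} (B : Equiv.Perm Cl → Prop) (f0 f : Cl → Option Color) : Prop :=
  ∃ s : TwistSeq Cl B, s.ConvOver f0 ∧ s.terminal f0 = f

/-- A labelling is legal if it never takes the value `NaC = none`. -/
def IsLegal {Cl : Type v} {X : Type u} (f : Cl → Option X) : Prop := ∀ c, f c ≠ none

/-! ### Clusters, faces, and distinguished configurations -/

/-- The group of permutations of cells of the edgeless cube generated by the basic twists. -/
def twistGroup (L : Type u) : Subgroup (Equiv.Perm (Cell L)) :=
  Subgroup.closure {π | IsBasic L π}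

/-- The cluster of a cell of the edgeless cube: its orbit under the group generated by the
basic twists. -/
def cluster {L : Type u} (c : Cell L) : Set (Cell L) :=
  {d | ∃ g ∈ twistGroup L, g c = d}

/-- The group of permutations of cells of the edged cube generated by the basic twists. -/
def etwistGroup (L : Type u) : Subgroup (Equiv.Perm (ECell L)) :=
  Subgroup.closure {π | IsEBasic L π}

/-- The cluster of a cell of the edged cube. -/
def ecluster {L : Type u} (c : ECell L) : Set (ECell L) :=
  {d | ∃ g ∈ etwistGroup L, g c = d}

open Classical in
/-- The solved configuration of the edgeless cube: each face gets one of six distinct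
colors. -/
noncomputable def fSolved (L : Type u) : Cell L → Option Color := fun c =>
  if c.1.1 = ExtCoord.posInf then some .red
  else if c.1.1 = ExtCoord.negInf then some .orange
  else if c.1.2.1 = ExtCoord.posInf then some .blue
  else if c.1.2.1 = ExtCoord.negInf then some .green
  else if c.1.2.2 = ExtCoord.posInf then some .white
  else some .yellow

/-- The color of each face: the face is named by the axis and the sign (`true` = `+∞`). -/
def faceColor : Axis → Bool → Color
  | .x, true => .red
  | .x, false => .orange
  | .y, true => .blue
  | .y, false => .green
  | .z, true => .white
  | .z, false => .yellow

open Classical in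
/-- The solved configuration of the edged cube. -/
noncomputable def efSolved (L : Type u) : ECell L → Option Color := fun c =>
  if c.1.1.coord c.1.2 = ExtCoord.posInf then some (faceColor c.1.2 true)
  else some (faceColor c.1.2 false)

/-- A center cell of the edgeless cube: two of its coordinates are `0`. -/
def IsCenter {L : Type u} (c : Cell L) : Prop := zeroCount c.1 = 2

/-- The global rotation of the whole cube about an axis, as a permutation of the cells of
the edgeless cube. -/
def rotAllPerm {L : Type u} (i : Axis) : Equiv.Perm (Cell L) where
  toFun c := ⟨rot i c.1, by rw [infCount_rot]; exact c.2⟩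
  invFun c := ⟨rotInv i c.1, by rw [infCount_rotInv]; exact c.2⟩
  left_inv c := Subtype.ext (rotInv_rot i c.1)
  right_inv c := Subtype.ext (rot_rotInv i c.1)

/-- The group of global rotations of the edgeless cube. -/
def rotGroup (L : Type u) : Subgroup (Equiv.Perm (Cell L)) :=
  Subgroup.closure (Set.range (rotAllPerm (L := L)))

/-- A configuration of the edgeless cube is standard if every non-center cluster contains
exactly four cells of each of the six colors, and its restriction to the center cluster is
obtained from the solved configuration by a global rotation of the cube. -/
def Standard {L : Type u} (f : Cell L → Option Color) : Prop :=
  (∀ c : Cell L, ¬IsCenter c → ∀ γ : Color, {d ∈ cluster c | f d = some γ}.ncard = 4) ∧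
  ∃ g ∈ rotGroup L, ∀ d : Cell L, IsCenter d → f d = fSolved L (g⁻¹ d)

/-- A configuration is invariant under all quarter-turn face twists. -/
def FaceInvariant {L : Type u} (f : Cell L → Option Color) : Prop :=
  ∀ (i : Axis) (α : ExtCoord L), α.isInfB = true →
    ∀ c : Cell L, f ((quarterTurn i α)⁻¹ c) = f c

/-! ### Quadrants and cluster configurations -/

/-- The upper-right quadrant `D` of the Front face: the cells `(x, y, +∞)` with `x ∈ L`
and `y ∈ {0} ∪ L`; every non-center cluster has a unique representative in `D`. -/
def Dset (L : Type u) : Set (Cell L) :=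
  {c | ∃ (a : L) (b : ExtCoord L), (b = ExtCoord.zero ∨ ∃ r : L, b = ExtCoord.pos r) ∧
    c.1 = (ExtCoord.pos a, b, ExtCoord.posInf)}

/-- Two cells lie in the same face quadrant (an image of `D` under a global rotation). -/
def SameQuadrant {L : Type u} (d d' : Cell L) : Prop :=
  ∃ g ∈ rotGroup L, d ∈ (fun c => g c) '' Dset L ∧ d' ∈ (fun c => g c) '' Dset L

/-! ### Coupled cells of the edged cube -/

/-- Two cells of the edged cube are coupled if they occupy the same location but belong to
different faces (they are parts of a common edge or corner cubie). -/
def Coupled {L : Type u} (c c' : ECell L) : Prop := c.1.1 = c'.1.1 ∧ c.1.2 ≠ c'.1.2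

/-- An edge cell: exactly two infinite coordinates. -/
def IsEdgeCell {L : Type u} (c : ECell L) : Prop := infCount c.1.1 = 2

/-- A corner cell: three infinite coordinates. -/
def IsCornerCell {L : Type u} (c : ECell L) : Prop := infCount c.1.1 = 3

/-- An edge-cross cell: an edge cell one of whose coordinates is `0`. -/
def IsEdgeCross {L : Type u} (c : ECell L) : Prop :=
  IsEdgeCell c ∧ 0 < zeroCount c.1.1

end InfRubik

/-!
The sequence is `s = H^ω ⌢ τ`, where `H` is the half turn of the Top face and `τ` is the
quarter turn of the layer `y = a` for some `a ∈ L`. Over the solved configuration every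
`H` acts trivially, so `s` merely applies `τ` and ends legal. That configuration is no longer
invariant under `H`: the Top cells `(0, a, +∞)` and `(0, -a, +∞)`, which `H` swaps, now
carry the colors orange (brought up by `τ` from the face `x = -∞`) and white. During the second
block `H^ω` of `s ⌢ s` the color of `(0, a, +∞)` therefore alternates and has no limit at `ω`.
-/

namespace InfRubik

section Run

open Ordinal

variable {Cl : Type v} {X : Type u}

theorem eventualVal_eq_some_iff {lam : Ordinal.{v}} {g : Ordinal.{v} → Option X} {x : X} :
    eventualVal lam (fun η _ => g η) = some x ↔
      ∃ γ < lam, ∀ η < lam, γ ≤ η → g η = some x := by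
  unfold eventualVal
  split_ifs with h
  · rw [Option.some_inj]
    obtain ⟨γ', hγ', hg'⟩ := h.choose_spec
    constructor
    · rintro rfl
      exact ⟨γ', hγ', hg'⟩
    · rintro ⟨γ, hγ, hg⟩
      have hmax : max γ γ' < lam := max_lt hγ hγ'
      exact Option.some_inj.mp
        ((hg' _ hmax (le_max_right _ _)).symm.trans (hg _ hmax (le_max_left _ _)))
  · simp only [false_iff]
    rintro ⟨γ, hγ, hg⟩
    exact h ⟨x, γ, hγ, hg⟩

theorem eventualVal_eq_of_eventually_eq {lam γ : Ordinal.{v}} (hγ : γ < lam)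
    {g : Ordinal.{v} → Option X} {x : Option X} (hg : ∀ η < lam, γ ≤ η → g η = x) :
    eventualVal lam (fun η _ => g η) = x := by
  cases x with
  | some x => exact eventualVal_eq_some_iff.mpr ⟨γ, hγ, hg⟩
  | none =>
    refine Option.eq_none_iff_forall_ne_some.mpr fun y hy => ?_
    obtain ⟨γ', hγ', hg'⟩ := eventualVal_eq_some_iff.mp hy
    have hmax : max γ γ' < lam := max_lt hγ hγ'
    simpa [hg _ hmax (le_max_left _ _)] using hg' _ hmax (le_max_right _ _)

theorem eventualVal_eq_none_of_frequently_ne {lam : Ordinal.{v}} {g : Ordinal.{v} → Option X}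
    (hg : ∀ (x : X), ∀ γ < lam, ∃ η < lam, γ ≤ η ∧ g η ≠ some x) :
    eventualVal lam (fun η _ => g η) = none := by
  refine Option.eq_none_iff_forall_ne_some.mpr fun x hx => ?_
  obtain ⟨γ, hγ, hγx⟩ := eventualVal_eq_some_iff.mp hx
  obtain ⟨η, hη, hγη, hne⟩ := hg x γ hγ
  exact hne (hγx η hη hγη)

theorem eventualVal_add {b lam : Ordinal.{v}} (hlam : lam ≠ 0) (g : Ordinal.{v} → Option X) :
    eventualVal (b + lam) (fun η _ => g η) = eventualVal lam (fun ζ _ => g (b + ζ)) := by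
  refine Option.ext fun x => ?_
  simp only [eventualVal_eq_some_iff]
  constructor
  · rintro ⟨γ, hγ, hg⟩
    exact ⟨γ - b, sub_lt_of_lt_add hγ (pos_iff_ne_zero.mpr hlam),
      fun ζ hζ hle => hg _ (add_lt_add_right hζ b) (Ordinal.sub_le.mp hle)⟩
  · rintro ⟨γ, hγ, hg⟩
    refine ⟨b + γ, add_lt_add_right hγ b, fun η hη hle => ?_⟩
    obtain ⟨ζ, rfl⟩ : ∃ ζ, η = b + ζ :=
      ⟨η - b, (Ordinal.add_sub_cancel_of_le (le_self_add.trans hle)).symm⟩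
    exact hg ζ ((add_lt_add_iff_left b).mp hη) ((add_le_add_iff_left b).mp hle)

variable (σ : Ordinal.{v} → Equiv.Perm Cl) (f0 : Cl → Option X)

@[simp] theorem run_zero : run σ f0 0 = f0 := by
  rw [run, limitRecOn_zero]

theorem run_add_one (η : Ordinal.{v}) (c : Cl) :
    run σ f0 (η + 1) c = run σ f0 η ((σ η)⁻¹ c) := by
  unfold run
  rw [limitRecOn_add_one]

theorem run_of_isSuccLimit {lam : Ordinal.{v}} (h : Order.IsSuccLimit lam) :
    run σ f0 lam = fun c => eventualVal lam (fun η _ => run σ f0 η c) := by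
  rw [run, limitRecOn_limit _ _ _ _ h]
  rfl

theorem run_congr {σ' : Ordinal.{v} → Equiv.Perm Cl} {θ : Ordinal.{v}}
    (h : ∀ η < θ, σ η = σ' η) : run σ f0 θ = run σ' f0 θ := by
  induction θ using limitRecOn with
  | zero => simp
  | add_one η ih =>
    have hlt : η < η + 1 := lt_add_one η
    funext c
    rw [run_add_one, run_add_one, ih fun ζ hζ => h ζ (hζ.trans hlt), h η hlt]
  | limit θ hθ ih =>
    rw [run_of_isSuccLimit _ _ hθ, run_of_isSuccLimit _ _ hθ]
    funext c
    refine congrArg (eventualVal θ) (funext fun η => funext fun hη => ?_)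
    rw [ih η hη fun ζ hζ => h ζ (hζ.trans hη)]

theorem run_natCast {π : Equiv.Perm Cl} (hσ : ∀ n : ℕ, σ n = π) (n : ℕ) (c : Cl) :
    run σ f0 n c = f0 ((π⁻¹ ^ n) c) := by
  induction n generalizing c with
  | zero => simp
  | succ n ih => rw [Nat.cast_succ, run_add_one, ih, hσ, pow_succ, Equiv.Perm.mul_apply]

theorem run_omega0_of_invariant {π : Equiv.Perm Cl} (hσ : ∀ n : ℕ, σ n = π)
    (hf : ∀ c, f0 (π⁻¹ c) = f0 c) : run σ f0 ω = f0 := by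
  have hpow : ∀ (n : ℕ) c, f0 ((π⁻¹ ^ n) c) = f0 c := by
    intro n
    induction n with
    | zero => simp
    | succ n ih => intro c; rw [pow_succ', Equiv.Perm.mul_apply, hf, ih]
  funext c
  rw [run_of_isSuccLimit _ _ isSuccLimit_omega0]
  refine eventualVal_eq_of_eventually_eq omega0_pos fun η hη _ => ?_
  obtain ⟨n, rfl⟩ := lt_omega0.mp hη
  rw [run_natCast σ f0 hσ, hpow]

theorem run_omega0_eq_none_of_swap {π : Equiv.Perm Cl} (hσ : ∀ n : ℕ, σ n = π) {c : Cl}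
    (hc : π⁻¹ (π⁻¹ c) = c) (hne : f0 (π⁻¹ c) ≠ f0 c) : run σ f0 ω c = none := by
  have heven : ∀ k : ℕ, (π⁻¹ ^ (2 * k)) c = c := fun k => by
    rw [pow_mul]
    exact Equiv.Perm.pow_apply_eq_self_of_apply_eq_self (by rwa [sq, Equiv.Perm.mul_apply]) k
  rw [run_of_isSuccLimit _ _ isSuccLimit_omega0]
  refine eventualVal_eq_none_of_frequently_ne fun x γ hγ => ?_
  obtain ⟨k, rfl⟩ := lt_omega0.mp hγ
  have hk : k ≤ 2 * k := by omega
  by_cases hx : f0 c = some x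
  · refine ⟨(2 * k + 1 : ℕ), natCast_lt_omega0 _,
      by exact_mod_cast hk.trans (Nat.le_succ _), ?_⟩
    rwa [run_natCast σ f0 hσ, pow_succ', Equiv.Perm.mul_apply, heven, ← hx]
  · refine ⟨(2 * k : ℕ), natCast_lt_omega0 _, by exact_mod_cast hk, ?_⟩
    rwa [run_natCast σ f0 hσ, heven]

end Run

namespace TwistSeq

variable {Cl : Type v} {B : Equiv.Perm Cl → Prop} {X : Type u}

theorem run_concat_add (s t : TwistSeq Cl B) (f0 : Cl → Option X) (η : Ordinal.{v}) :
    run (s.concat t).seq f0 (s.len + η) = run t.seq (s.terminal f0) η := by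
  induction η using Ordinal.limitRecOn with
  | zero =>
    rw [add_zero, run_zero, terminal]
    exact run_congr _ _ fun ζ hζ => if_pos hζ
  | add_one η ih =>
    have hseq : (s.concat t).seq (s.len + η) = t.seq η := by
      simp [concat, Ordinal.add_sub_cancel]
    funext c
    rw [← add_assoc, run_add_one, run_add_one, ih, hseq]
  | limit η hη ih =>
    rw [run_of_isSuccLimit _ _ (Ordinal.isSuccLimit_add _ hη), run_of_isSuccLimit _ _ hη]
    funext c
    rw [eventualVal_add hη.ne_bot]
    refine congrArg (eventualVal η) (funext fun ζ => funext fun hζ => ?_)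
    rw [ih ζ hζ]

theorem terminal_concat (s t : TwistSeq Cl B) (f0 : Cl → Option X) :
    (s.concat t).terminal f0 = t.terminal (s.terminal f0) :=
  run_concat_add s t f0 t.len

end TwistSeq

section Cube

open Ordinal

variable {L : Type u}

theorem quarterTurn_inv_apply_coe (i : Axis) (α : ExtCoord L) (c : Cell L) :
    ((quarterTurn i α)⁻¹ c).1 = qtTripleInv i α c.1 :=
  rfl

theorem qtTripleInv_of_coord_eq {i : Axis} {α : ExtCoord L} {p : Triple L} (h : p.coord i = α) :
    qtTripleInv i α p = rotInv i p :=
  if_pos h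

theorem qtTripleInv_of_coord_ne {i : Axis} {α : ExtCoord L} {p : Triple L} (h : p.coord i ≠ α) :
    qtTripleInv i α p = p :=
  if_neg h

theorem fSolved_ne_none (c : Cell L) : fSolved L c ≠ none := by
  unfold fSolved
  split_ifs <;> simp

theorem fSolved_of_z_eq_posInf {c : Cell L} (h : c.1.2.2 = .posInf) :
    fSolved L c = some .white := by
  obtain ⟨⟨x, y, z⟩, hc⟩ := c
  subst h
  cases x <;> cases y <;> simp [infCount, ExtCoord.isInfB, fSolved] at hc ⊢

theorem fSolved_quarterTurn_z_posInf_inv (c : Cell L) :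
    fSolved L ((quarterTurn .z .posInf)⁻¹ c) = fSolved L c := by
  by_cases h : c.1.coord .z = .posInf
  · have h' : ((quarterTurn .z .posInf)⁻¹ c).1.2.2 = .posInf := by
      rw [quarterTurn_inv_apply_coe, qtTripleInv_of_coord_eq h]
      exact h
    rw [fSolved_of_z_eq_posInf h, fSolved_of_z_eq_posInf h']
  · congr 1
    exact Subtype.ext (qtTripleInv_of_coord_ne h)

noncomputable def topHalfTurn (L : Type u) : Equiv.Perm (Cell L) :=
  quarterTurn .z .posInf ^ 2

theorem fSolved_topHalfTurn_inv (c : Cell L) :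
    fSolved L ((topHalfTurn L)⁻¹ c) = fSolved L c := by
  rw [topHalfTurn, sq, mul_inv_rev, Equiv.Perm.mul_apply, fSolved_quarterTurn_z_posInf_inv,
    fSolved_quarterTurn_z_posInf_inv]

theorem topHalfTurn_inv_apply_coe {c : Cell L} (h : c.1.coord .z = .posInf) :
    ((topHalfTurn L)⁻¹ c).1 = (c.1.1.reflect, c.1.2.1.reflect, .posInf) := by
  rw [topHalfTurn, sq, mul_inv_rev, Equiv.Perm.mul_apply, quarterTurn_inv_apply_coe,
    quarterTurn_inv_apply_coe, qtTripleInv_of_coord_eq h,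
    qtTripleInv_of_coord_eq ((coord_rotInv_self _ _).trans h)]
  exact Prod.ext rfl (Prod.ext rfl h)

def topCellPos (a : L) : Cell L := ⟨(.zero, .pos a, .posInf), rfl⟩

def topCellNeg (a : L) : Cell L := ⟨(.zero, .neg a, .posInf), rfl⟩

theorem topHalfTurn_inv_topCellPos (a : L) : (topHalfTurn L)⁻¹ (topCellPos a) = topCellNeg a :=
  Subtype.ext (topHalfTurn_inv_apply_coe rfl)

theorem topHalfTurn_inv_topCellNeg (a : L) : (topHalfTurn L)⁻¹ (topCellNeg a) = topCellPos a :=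
  Subtype.ext (topHalfTurn_inv_apply_coe rfl)

theorem fSolved_quarterTurn_inv_topCellPos (a : L) :
    fSolved L ((quarterTurn .y (.pos a))⁻¹ (topCellPos a)) = some .orange := by
  have h : ((quarterTurn .y (.pos a))⁻¹ (topCellPos a)).1 = (.negInf, .pos a, .zero) := by
    rw [quarterTurn_inv_apply_coe,
      qtTripleInv_of_coord_eq (show (topCellPos a).1.coord .y = .pos a from rfl)]
    rfl
  rw [fSolved, h]
  simp

theorem fSolved_quarterTurn_inv_topCellNeg (a : L) :
    fSolved L ((quarterTurn .y (.pos a))⁻¹ (topCellNeg a)) = some .white := by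
  have h : (quarterTurn .y (.pos a))⁻¹ (topCellNeg a) = topCellNeg a :=
    Subtype.ext (qtTripleInv_of_coord_ne (by simp [topCellNeg, Triple.coord]))
  rw [h]
  exact fSolved_of_z_eq_posInf rfl

noncomputable def breakingSeq (a : L) : BasicSeq L where
  len := ω + 1
  seq η := if η < ω then topHalfTurn L else quarterTurn .y (.pos a)
  basic η _ := by
    split_ifs
    · exact ⟨.z, .posInf, Or.inr (Or.inl rfl)⟩
    · exact ⟨.y, .pos a, Or.inl rfl⟩

theorem breakingSeq_seq_natCast (a : L) (n : ℕ) : (breakingSeq a).seq n = topHalfTurn L :=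
  if_pos (natCast_lt_omega0 n)

theorem terminal_breakingSeq {X : Type*} (a : L) (f0 : Cell L → Option X) (c : Cell L) :
    (breakingSeq a).terminal f0 c =
      run (breakingSeq a).seq f0 ω ((quarterTurn .y (.pos a))⁻¹ c) := by
  rw [TwistSeq.terminal, show (breakingSeq a).len = ω + 1 from rfl, run_add_one]
  congr 3
  exact if_neg (lt_irrefl ω)

theorem terminal_breakingSeq_fSolved (a : L) :
    (breakingSeq a).terminal (fSolved L) =
      fun c => fSolved L ((quarterTurn .y (.pos a))⁻¹ c) := by
  funext c
  rw [terminal_breakingSeq,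
    run_omega0_of_invariant _ _ (breakingSeq_seq_natCast a) fSolved_topHalfTurn_inv]

theorem run_breakingSeq_omega0_topCellPos (a : L) :
    run (breakingSeq a).seq (fun c => fSolved L ((quarterTurn .y (.pos a))⁻¹ c)) ω
      (topCellPos a) = none := by
  refine run_omega0_eq_none_of_swap _ _ (breakingSeq_seq_natCast a) ?_ ?_
  · rw [topHalfTurn_inv_topCellPos, topHalfTurn_inv_topCellNeg]
  · rw [topHalfTurn_inv_topCellPos, fSolved_quarterTurn_inv_topCellNeg,
      fSolved_quarterTurn_inv_topCellPos]
    decide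

end Cube

end InfRubik

open InfRubik in
/-- On the edgeless cube, the basic sequences convergent over the solved configuration are
not closed under concatenation: some such sequence has divergent self-concatenation. -/
theorem conv_not_closed_concat {L : Type u} [Infinite L] :
    ∃ s : BasicSeq L, s.ConvOver (fSolved L) ∧ ¬ (s.concat s).ConvOver (fSolved L) := by
  obtain ⟨a⟩ : Nonempty L := inferInstance
  refine ⟨breakingSeq a, fun c => ?_, fun hconv => ?_⟩
  · rw [terminal_breakingSeq_fSolved]
    exact fSolved_ne_none _
  · apply hconv (quarterTurn .y (.pos a) (topCellPos a))
    rw [TwistSeq.terminal_concat, terminal_breakingSeq_fSolved, terminal_breakingSeq,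
      ← Equiv.Perm.mul_apply, inv_mul_cancel, Equiv.Perm.one_apply]
    exact run_breakingSeq_omega0_topCellPos a
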